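/- The function f̂(u) = Σ_{i=1}^d β_i log(p_i(u)) on ℝ^{d-1} (with p the logit stick-breaking parametrization of the simplex) has gradient that is Lipschitz with constant (1/4) Σ_{i=1}^d |β_i|. -/

import Mathlib

/-!
Since `log σ(t) = t - softplus t` and `log (1 - σ(t)) = -softplus t`, with
`softplus t = log (1 + exp t)`, the function `f̂` is separable:
`f̂(u) = Σ_j (β_j u_j - c_j softplus u_j)` with `c_j = Σ_{k ≥ j} β_k`. Its gradient has
coordinates `β_j - c_j σ(u_j)`. As `σ' = σ (1 - σ) ≤ 1/4` and `|c_j| ≤ Σ_i |β_i|`, every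
coordinate of the gradient is `(1/4) Σ_i |β_i|`-Lipschitz in `u_j`, hence so is the gradient
in the Euclidean norm.
-/

open Finset Real

namespace Real

noncomputable def softplus (t : ℝ) : ℝ := log (1 + exp t)

lemma exp_div_one_add_exp (t : ℝ) : exp t / (1 + exp t) = sigmoid t := by
  rw [sigmoid_def, exp_neg]
  field_simp
  ring

lemma log_sigmoid (t : ℝ) : log (sigmoid t) = t - softplus t := by
  rw [softplus, ← exp_div_one_add_exp, log_div (exp_ne_zero t) (by positivity), log_exp]

lemma log_one_sub_sigmoid (t : ℝ) : log (1 - sigmoid t) = -softplus t := by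
  rw [softplus, ← exp_div_one_add_exp, ← log_inv]
  congr 1
  field_simp
  ring

lemma hasDerivAt_softplus (t : ℝ) : HasDerivAt softplus (sigmoid t) t := by
  rw [← exp_div_one_add_exp]
  exact ((hasDerivAt_exp t).const_add 1).log (by positivity)

lemma sigmoid_mul_one_sub_sigmoid_le (t : ℝ) : sigmoid t * (1 - sigmoid t) ≤ 1 / 4 := by
  nlinarith [sq_nonneg (sigmoid t - 1 / 2)]

lemma lipschitzWith_sigmoid : LipschitzWith (1 / 4) sigmoid := by
  refine lipschitzWith_of_nnnorm_deriv_le differentiable_sigmoid fun t => ?_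
  rw [← NNReal.coe_le_coe, coe_nnnorm, deriv_sigmoid, norm_of_nonneg
    (mul_nonneg (sigmoid_nonneg t) (sub_nonneg.2 (sigmoid_le_one t)))]
  simpa using sigmoid_mul_one_sub_sigmoid_le t

lemma abs_sigmoid_sub_sigmoid_le (a b : ℝ) : |sigmoid a - sigmoid b| ≤ 1 / 4 * |a - b| := by
  simpa [Real.dist_eq] using lipschitzWith_sigmoid.dist_le_mul a b

end Real

section Separable

variable {ι : Type*} [Fintype ι]

lemma hasGradientAt_sum_apply {g : ι → ℝ → ℝ} {g' : ι → ℝ} {x : EuclideanSpace ℝ ι}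
    (hg : ∀ j, HasDerivAt (g j) (g' j) (x j)) :
    HasGradientAt (fun u : EuclideanSpace ℝ ι => ∑ j, g j (u j)) (WithLp.toLp 2 g') x := by
  rw [hasGradientAt_iff_hasFDerivAt]
  refine (HasFDerivAt.fun_sum fun j _ => (hg j).comp_hasFDerivAt x
    (EuclideanSpace.proj j : EuclideanSpace ℝ ι →L[ℝ] ℝ).hasFDerivAt).congr_fderiv ?_
  ext u
  simp [PiLp.inner_apply, mul_comm]

lemma EuclideanSpace.norm_le_mul_norm_of_abs_le {a b : EuclideanSpace ℝ ι} {L : ℝ}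
    (hL : 0 ≤ L) (h : ∀ j, |a j| ≤ L * |b j|) : ‖a‖ ≤ L * ‖b‖ := by
  rw [← pow_le_pow_iff_left₀ (norm_nonneg a) (by positivity) two_ne_zero, mul_pow,
    EuclideanSpace.norm_sq_eq, EuclideanSpace.norm_sq_eq, mul_sum]
  refine sum_le_sum fun j _ => ?_
  rw [← mul_pow, norm_eq_abs, norm_eq_abs]
  exact pow_le_pow_left₀ (abs_nonneg _) (h j) 2

end Separable

section StickBreaking

variable {d : ℕ}

noncomputable def stickBreaking (v : Fin (d - 1) → ℝ) (k : Fin d) : ℝ :=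
  if h : (k : ℕ) < d - 1 then
    sigmoid (v ⟨k, h⟩) *
      ∏ i ∈ univ.filter (fun i : Fin (d - 1) => (i : ℕ) < k), (1 - sigmoid (v i))
  else ∏ i, (1 - sigmoid (v i))

lemma log_stickBreaking (v : Fin (d - 1) → ℝ) (k : Fin d) :
    log (stickBreaking v k) = ∑ i : Fin (d - 1),
      ((if (i : ℕ) = k then v i else 0) - if (i : ℕ) ≤ k then softplus (v i) else 0) := by
  have hpos : ∀ i, 1 - sigmoid (v i) ≠ 0 := fun i => (sub_pos.2 (sigmoid_lt_one _)).ne'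
  rw [sum_sub_distrib, ← sum_filter, ← sum_filter, stickBreaking]
  split_ifs with h
  · have h_eq : univ.filter (fun i : Fin (d - 1) => (i : ℕ) = k) = {⟨k, h⟩} := by
      ext i; simp [Fin.ext_iff]
    have h_le : univ.filter (fun i : Fin (d - 1) => (i : ℕ) ≤ k) =
        insert ⟨k, h⟩ (univ.filter fun i : Fin (d - 1) => (i : ℕ) < k) := by
      ext i; simp only [mem_filter, mem_univ, true_and, mem_insert, Fin.ext_iff]; omega
    rw [log_mul (sigmoid_pos _).ne' (prod_ne_zero_iff.2 fun i _ => hpos i),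
      log_prod fun i _ => hpos i, h_eq, h_le, sum_insert (by simp), sum_singleton, log_sigmoid]
    simp only [log_one_sub_sigmoid, sum_neg_distrib]
    ring
  · have h_eq : univ.filter (fun i : Fin (d - 1) => (i : ℕ) = k) = ∅ := by
      ext i; simp only [mem_filter, mem_univ, true_and, notMem_empty, iff_false]; omega
    have h_le : univ.filter (fun i : Fin (d - 1) => (i : ℕ) ≤ k) = univ := by
      ext i; simp only [mem_filter, mem_univ, true_and, iff_true]; omega
    rw [log_prod fun i _ => hpos i, h_eq, h_le, sum_empty]
    simp only [log_one_sub_sigmoid, sum_neg_distrib, zero_sub]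

lemma sum_mul_log_stickBreaking (β : Fin d → ℝ) (v : Fin (d - 1) → ℝ) :
    ∑ k, β k * log (stickBreaking v k) =
      ∑ j, (β (Fin.castLE (Nat.sub_le d 1) j) * v j -
        (∑ k ∈ univ.filter (fun k : Fin d => (j : ℕ) ≤ k), β k) * softplus (v j)) := by
  simp_rw [log_stickBreaking, mul_sum]
  rw [sum_comm]
  refine sum_congr rfl fun j _ => ?_
  have h_eq : univ.filter (fun k : Fin d => (j : ℕ) = k) = {Fin.castLE (Nat.sub_le d 1) j} := by
    ext k; simp [Fin.ext_iff, eq_comm]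
  simp only [mul_sub, mul_ite, mul_zero, sum_sub_distrib, ← sum_filter, h_eq, sum_singleton,
    sum_mul]

end StickBreaking

theorem fhat_gradient_lipschitz_general (d : ℕ) (β : Fin d → ℝ)
    (σ : ℝ → ℝ) (hσ : ∀ t, σ t = Real.exp t / (1 + Real.exp t))
    (p : EuclideanSpace ℝ (Fin (d - 1)) → Fin d → ℝ)
    (hp : ∀ v (k : Fin d), p v k =
      if h : (k : ℕ) < d - 1 then
        σ (v ⟨k, h⟩) *
          ∏ i ∈ Finset.univ.filter (fun i : Fin (d - 1) => (i : ℕ) < (k : ℕ)), (1 - σ (v i))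
      else ∏ i : Fin (d - 1), (1 - σ (v i)))
    (fhat : EuclideanSpace ℝ (Fin (d - 1)) → ℝ)
    (hfhat : ∀ v, fhat v = ∑ i : Fin d, β i * Real.log (p v i)) :
    ∀ x y, ‖gradient fhat x - gradient fhat y‖ ≤
      (1 / 4 * ∑ i : Fin d, |β i|) * ‖x - y‖ := by
  intro x y
  obtain rfl : σ = sigmoid := funext fun t => (hσ t).trans (exp_div_one_add_exp t)
  set a : Fin (d - 1) → ℝ := fun j => β (Fin.castLE (Nat.sub_le d 1) j)
  set c : Fin (d - 1) → ℝ := fun j =>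
    ∑ k ∈ univ.filter (fun k : Fin d => (j : ℕ) ≤ k), β k
  have hfhat_sep : fhat = fun u => ∑ j, (a j * u j - c j * softplus (u j)) :=
    funext fun u => by
      have hpu : ∀ k, p u k = stickBreaking u.ofLp k := hp u
      simp only [hfhat, hpu, sum_mul_log_stickBreaking, a, c]
  have hderiv : ∀ j t,
      HasDerivAt (fun t => a j * t - c j * softplus t) (a j - c j * sigmoid t) t := fun j t => by
    simpa using
      ((hasDerivAt_id t).const_mul (a j)).fun_sub ((hasDerivAt_softplus t).const_mul (c j))
  have hgrad : ∀ v, gradient fhat v = WithLp.toLp 2 fun j => a j - c j * sigmoid (v j) :=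
    fun v => hfhat_sep ▸ (hasGradientAt_sum_apply fun j => hderiv j (v j)).gradient
  have hc : ∀ j, |c j| ≤ ∑ i, |β i| := fun j =>
    (abs_sum_le_sum_abs _ _).trans
      (sum_le_sum_of_subset_of_nonneg (filter_subset _ _) fun i _ _ => abs_nonneg _)
  rw [hgrad, hgrad, ← WithLp.toLp_sub]
  refine EuclideanSpace.norm_le_mul_norm_of_abs_le (by positivity) fun j => ?_
  calc |(a j - c j * sigmoid (x j)) - (a j - c j * sigmoid (y j))|
      = |c j| * |sigmoid (y j) - sigmoid (x j)| := by rw [← abs_mul]; ring_nf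
    _ ≤ (∑ i, |β i|) * (1 / 4 * |y j - x j|) :=
      mul_le_mul (hc j) (abs_sigmoid_sub_sigmoid_le _ _) (abs_nonneg _) (by positivity)
    _ = 1 / 4 * (∑ i, |β i|) * |(x - y) j| := by rw [PiLp.sub_apply, abs_sub_comm]; ring

/-- The gradient of f̂(u) = Σ_i β_i log p_i(u) (logit stick-breaking
parametrization) is Lipschitz with constant (1/4) Σ_i |β_i|. -/
theorem fhat_gradient_lipschitz (d : ℕ) (hd : 2 ≤ d) (β : Fin d → ℝ)
    (σ : ℝ → ℝ) (hσ : ∀ t, σ t = Real.exp t / (1 + Real.exp t))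
    (p : EuclideanSpace ℝ (Fin (d - 1)) → Fin d → ℝ)
    (hp : ∀ v (k : Fin d), p v k =
      if h : (k : ℕ) < d - 1 then
        σ (v ⟨k, h⟩) *
          ∏ i ∈ Finset.univ.filter (fun i : Fin (d - 1) => (i : ℕ) < (k : ℕ)), (1 - σ (v i))
      else ∏ i : Fin (d - 1), (1 - σ (v i)))
    (fhat : EuclideanSpace ℝ (Fin (d - 1)) → ℝ)
    (hfhat : ∀ v, fhat v = ∑ i : Fin d, β i * Real.log (p v i)) :
    ∀ x y, ‖gradient fhat x - gradient fhat y‖ ≤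
      (1 / 4 * ∑ i : Fin d, |β i|) * ‖x - y‖ :=
  fhat_gradient_lipschitz_general d β σ hσ p hp fhat hfhat
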